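/- arXiv:2108.01209 — 2 statements merged into one kernel-verified Lean document; each statement's English description precedes it below -/
import Mathlib

section
/- Let q ≡ 3 (mod 8) be an odd prime power and let β ∈ NQR(q)\{−1} with β ∉ {2, 2⁻¹}. Let 𝓕 = {F_γ : γ ∈ F_q} be the one-factorization of the complete graph on F_q ∪ {∞} generated by the starter S_β = {{x, xβ} : x ∈ QR(q)}, and let 𝓖 = {G_γ : γ ∈ F_q} be the one-factorization generated by the starter −S_β = {{y, yβ} : y ∈ NQR(q)}. Then for every F ∈ 𝓕 and G ∈ 𝓖, the union F ∪ G contains no cycle C of length four with ∞ ∈ V(C). -/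
/-!
The only neighbours of `∞` in `F_γ ∪ G_δ` are `γ` and `δ`, so a four-cycle through `∞` is
`∞ γ z δ` with `γz ∈ G_δ` and `δz ∈ F_γ`. Translating back by `γ`, with `d = δ - γ` and
`w = z - γ`, this says `{d, w} ∈ S_β` and `{-d, w - d} ∈ -S_β`. As `q ≡ 3 (mod 4)`, `-1` is a
non-square, so negating the second pair gives `{d, d - w} ∈ S_β`. Distinct pairs of `S_β` are
disjoint since `β` is a non-square, hence `w = d - w`, and `{d, d / 2} = {x, xβ}` forces
`β ∈ {2, 2⁻¹}`.
-/

open SimpleGraph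

namespace Paper

variable {V : Type*} {Γ : Type*} {F : Type*}

/-- A one-factor on vertex set `V`: a perfect matching, i.e. every vertex has a
unique neighbour. -/
def IsOneFactor (G : SimpleGraph V) : Prop :=
  ∀ v : V, ∃! w : V, G.Adj v w

/-- A one-factorization of the complete graph on `V`: a set of one-factors that are
pairwise edge-disjoint and whose edges cover all edges of the complete graph. -/
def IsOneFactorization (𝓕 : Set (SimpleGraph V)) : Prop :=
  (∀ G ∈ 𝓕, IsOneFactor G) ∧
  (∀ G ∈ 𝓕, ∀ H ∈ 𝓕, G ≠ H → Disjoint G.edgeSet H.edgeSet) ∧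
  (∀ u v : V, u ≠ v → ∃ G ∈ 𝓕, G.Adj u v)

/-- Two one-factorizations of the complete graph are orthogonal if any two of their
members share at most one edge. -/
def AreOrthogonalFactorizations (𝓕 𝓖 : Set (SimpleGraph V)) : Prop :=
  IsOneFactorization 𝓕 ∧ IsOneFactorization 𝓖 ∧
    ∀ G ∈ 𝓕, ∀ H ∈ 𝓖, (G.edgeSet ∩ H.edgeSet).Subsingleton

/-- `s` is the vertex set of a cycle of length four in `H`. -/
def IsFourCycleOn (H : SimpleGraph V) (s : Set V) : Prop :=
  ∃ a b c d : V, a ≠ b ∧ a ≠ c ∧ a ≠ d ∧ b ≠ c ∧ b ≠ d ∧ c ≠ d ∧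
    s = {a, b, c, d} ∧ H.Adj a b ∧ H.Adj b c ∧ H.Adj c d ∧ H.Adj d a

/-- The number of (vertex sets of) cycles of length four contained in `H`. -/
noncomputable def fourCycleCount (H : SimpleGraph V) : ℕ :=
  Set.ncard {s : Set V | IsFourCycleOn H s}

/-- The set of nonzero squares (quadratic residues) of a field. -/
def QRset (F : Type*) [Field F] : Set F := {x | x ≠ 0 ∧ IsSquare x}

/-- The set of non-squares (quadratic non-residues) of a field. -/
def NQRset (F : Type*) [Field F] : Set F := {x | ¬ IsSquare x}

/-- Horton's starter `S_β = {{x, xβ} : x ∈ QR(q)}`, as a set of unordered pairs. -/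
def hortonStarter [Field F] (β : F) : Set (Sym2 F) :=
  {e | ∃ x : F, x ≠ 0 ∧ IsSquare x ∧ e = s(x, x * β)}

/-- `-S_β = {{y, yβ} : y ∈ NQR(q)}`, as a set of unordered pairs. -/
def hortonNegStarter [Field F] (β : F) : Set (Sym2 F) :=
  {e | ∃ y : F, ¬ IsSquare y ∧ e = s(y, y * β)}

/-- The one-factor `F_γ = {{∞, γ}} ∪ {{x + γ, y + γ} : {x, y} ∈ S}` of the complete
graph on `Γ ∪ {∞}` (with `∞ = none`) obtained by translating the starter `S` by `γ`. -/
def starterFactor [AddCommGroup Γ] (S : Set (Sym2 Γ)) (γ : Γ) : SimpleGraph (Option Γ) :=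
  SimpleGraph.fromEdgeSet
    ({s((none : Option Γ), some γ)} ∪ (Sym2.map (fun x => some (x + γ)) '' S))

/-- A starter for an additive abelian group: every nonzero element of the group
appears in exactly one pair, all elements appearing in pairs are nonzero, and every
nonzero difference arises from exactly one ordered pair. -/
def IsStarter [AddCommGroup Γ] (S : Set (Sym2 Γ)) : Prop :=
  (∀ z : Γ, z ≠ 0 → ∃! e : Sym2 Γ, e ∈ S ∧ z ∈ e) ∧
  (∀ e ∈ S, ∀ z ∈ e, z ≠ (0 : Γ)) ∧
  (∀ d : Γ, d ≠ 0 → ∃! p : Γ × Γ, s(p.1, p.2) ∈ S ∧ p.1 - p.2 = d)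

/-- A strong starter: a starter whose pair sums are nonzero and pairwise distinct. -/
def IsStrongStarter [AddCommGroup Γ] (S : Set (Sym2 Γ)) : Prop :=
  IsStarter S ∧
  (∀ x y : Γ, s(x, y) ∈ S → x + y ≠ 0) ∧
  (∀ x y u v : Γ, s(x, y) ∈ S → s(u, v) ∈ S → x + y = u + v → s(x, y) = s(u, v))

/-- Two starters are orthogonal if, writing `(x_d, y_d) ∈ S` and `(u_d, v_d) ∈ T`
for the ordered pairs with difference `d ≠ 0`, one has `u_d ≠ x_d` for all `d`, and
`u_d - x_d = u_e - x_e` implies `d = e`. -/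
def AreOrthogonalStarters [AddCommGroup Γ] (S T : Set (Sym2 Γ)) : Prop :=
  (∀ d x y u v : Γ, d ≠ 0 → s(x, y) ∈ S → s(u, v) ∈ T → x - y = d → u - v = d → u ≠ x) ∧
  (∀ d e x y u v x' y' u' v' : Γ, d ≠ 0 → e ≠ 0 →
    s(x, y) ∈ S → s(u, v) ∈ T → x - y = d → u - v = d →
    s(x', y') ∈ S → s(u', v') ∈ T → x' - y' = e → u' - v' = e →
    u - x = u' - x' → d = e)

lemma isSquare_mul_of_not_isSquare {K : Type*} [Field K] [Fintype K] {a b : K}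
    (ha : ¬ IsSquare a) (hb : ¬ IsSquare b) : IsSquare (a * b) := by
  classical
  have ha0 : a ≠ 0 := by rintro rfl; exact ha .zero
  have hb0 : b ≠ 0 := by rintro rfl; exact hb .zero
  refine (quadraticChar_one_iff_isSquare (mul_ne_zero ha0 hb0)).mp ?_
  rw [map_mul, quadraticChar_neg_one_iff_not_isSquare.mpr ha,
    quadraticChar_neg_one_iff_not_isSquare.mpr hb]
  norm_num

lemma IsFourCycleOn.exists_common_neighbor {H : SimpleGraph V} {s : Set V} {v : V}
    (hs : IsFourCycleOn H s) (hv : v ∈ s) :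
    ∃ p p' r, p ≠ p' ∧ r ≠ v ∧ H.Adj v p ∧ H.Adj v p' ∧ H.Adj p r ∧ H.Adj p' r := by
  obtain ⟨a, b, c, d, hab, hac, had, hbc, hbd, hcd, rfl, hab', hbc', hcd', hda'⟩ := hs
  simp only [Set.mem_insert_iff, Set.mem_singleton_iff] at hv
  rcases hv with rfl | rfl | rfl | rfl
  · exact ⟨b, d, c, hbd, hac.symm, hab', hda'.symm, hbc', hcd'.symm⟩
  · exact ⟨a, c, d, hac, hbd.symm, hab'.symm, hbc', hda'.symm, hcd'⟩
  · exact ⟨b, d, a, hbd, hac, hbc'.symm, hcd', hab'.symm, hda'⟩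
  · exact ⟨a, c, b, hac, hbd, hda', hcd'.symm, hab', hbc'.symm⟩

section StarterFactor

variable [AddCommGroup Γ] {S : Set (Sym2 Γ)} {γ : Γ}

lemma starterFactor_adj_none {v : Option Γ} (h : (starterFactor S γ).Adj none v) :
    v = some γ := by
  obtain ⟨h | ⟨e, -, he⟩, -⟩ := h
  · rw [Set.mem_singleton_iff, Sym2.eq_iff] at h
    simpa using h
  · have hn : (none : Option Γ) ∈ Sym2.map (fun x => some (x + γ)) e :=
      he ▸ Sym2.mem_mk_left _ _
    simp at hn

lemma starterFactor_adj_some {u v : Γ} (h : (starterFactor S γ).Adj (some u) (some v)) :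
    s(u - γ, v - γ) ∈ S := by
  obtain ⟨h | ⟨e, heS, he⟩, -⟩ := h
  · simp at h
  · have : Sym2.map (fun x => some (x + γ)) s(u - γ, v - γ) = s(some u, some v) := by simp
    rw [← this] at he
    rwa [← Sym2.map.injective ((Option.some_injective _).comp (add_left_injective γ)) he]

lemma starterFactor_not_adj_some_self (hS : ∀ e ∈ S, (0 : Γ) ∉ e) (z : Γ) :
    ¬ (starterFactor S γ).Adj (some γ) (some z) := fun h =>
  hS _ (starterFactor_adj_some h) (by simp)

end StarterFactor

section Horton

variable {K : Type*} [Field K] {β : K}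

lemma zero_notMem_of_mem_hortonStarter (hβ : β ≠ 0) :
    ∀ e ∈ hortonStarter β, (0 : K) ∉ e := by
  rintro _ ⟨x, hx, -, rfl⟩
  simp [eq_comm, hx, hβ]

lemma zero_notMem_of_mem_hortonNegStarter (hβ : β ≠ 0) :
    ∀ e ∈ hortonNegStarter β, (0 : K) ∉ e := by
  rintro _ ⟨y, hy, rfl⟩
  have hy0 : y ≠ 0 := by rintro rfl; exact hy .zero
  simp [eq_comm, hy0, hβ]

/-- Two pairs `{x, xβ}`, `{x', x'β}` of `S_β` sharing an element would make `β = x / x'`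
or `β = x' / x` a square. -/
lemma eq_of_mem_hortonStarter (hβ : ¬ IsSquare β) {d w w' : K}
    (h : s(d, w) ∈ hortonStarter β) (h' : s(d, w') ∈ hortonStarter β) : w = w' := by
  obtain ⟨x, hx0, hx, he⟩ := h
  obtain ⟨x', hx0', hx', he'⟩ := h'
  have cross : ∀ {a b : K}, a ≠ 0 → IsSquare a → IsSquare b → b ≠ a * β := by
    rintro a b ha0 ha hb rfl
    exact hβ (by simpa [ha0] using hb.div ha)
  rw [Sym2.eq_iff] at he he'
  rcases he with ⟨rfl, rfl⟩ | ⟨rfl, rfl⟩ <;> rcases he' with ⟨h1, rfl⟩ | ⟨h1, rfl⟩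
  · rw [h1]
  · exact absurd h1 (cross hx0' hx' hx)
  · exact absurd h1.symm (cross hx0 hx hx')
  · rw [mul_right_cancel₀ (by rintro rfl; exact hβ .zero) h1]

lemma neg_mem_hortonStarter_of_mem_hortonNegStarter [Fintype K] (hneg : ¬ IsSquare (-1 : K))
    {a b : K} (h : s(a, b) ∈ hortonNegStarter β) : s(-a, -b) ∈ hortonStarter β := by
  obtain ⟨y, hy, he⟩ := h
  have hy0 : y ≠ 0 := by rintro rfl; exact hy .zero
  refine ⟨-y, neg_ne_zero.mpr hy0, by simpa using isSquare_mul_of_not_isSquare hneg hy, ?_⟩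
  simpa using congrArg (Sym2.map Neg.neg) he

lemma sub_notMem_hortonStarter (hβ : ¬ IsSquare β) (hβ2 : β ≠ 2) (hβ2' : β ≠ 2⁻¹) {d w : K}
    (h : s(d, w) ∈ hortonStarter β) : s(d, d - w) ∉ hortonStarter β := by
  intro h'
  have hw : d = 2 * w := by linear_combination -eq_of_mem_hortonStarter hβ h h'
  obtain ⟨x, hx0, -, he⟩ := h
  rw [Sym2.eq_iff] at he
  rcases he with ⟨rfl, rfl⟩ | ⟨rfl, rfl⟩
  · exact hβ2' (eq_inv_of_mul_eq_one_right (mul_left_cancel₀ hx0 (by linear_combination -hw)))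
  · exact hβ2 (mul_left_cancel₀ hx0 (by linear_combination hw))

lemma not_adj_of_adj_sup_hortonFactors [Fintype K] (hneg : ¬ IsSquare (-1 : K))
    (hβ : ¬ IsSquare β) (hβ2 : β ≠ 2) (hβ2' : β ≠ 2⁻¹) {γ δ z : K}
    (hγ : (starterFactor (hortonStarter β) γ ⊔ starterFactor (hortonNegStarter β) δ).Adj
      (some γ) (some z)) :
    ¬ (starterFactor (hortonStarter β) γ ⊔ starterFactor (hortonNegStarter β) δ).Adj
      (some δ) (some z) := by
  intro hδ
  have hβ0 : β ≠ 0 := by rintro rfl; exact hβ .zero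
  have hG : s(γ - δ, z - δ) ∈ hortonNegStarter β := by
    rcases hγ with h | h
    · exact absurd h (starterFactor_not_adj_some_self (zero_notMem_of_mem_hortonStarter hβ0) z)
    · exact starterFactor_adj_some h
  have hF : s(δ - γ, z - γ) ∈ hortonStarter β := by
    rcases hδ with h | h
    · exact starterFactor_adj_some h
    · exact absurd h
        (starterFactor_not_adj_some_self (zero_notMem_of_mem_hortonNegStarter hβ0) z)
  refine sub_notMem_hortonStarter hβ hβ2 hβ2' hF ?_
  convert neg_mem_hortonStarter_of_mem_hortonNegStarter hneg hG using 2 <;> ring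

end Horton

theorem statement_11_general {F : Type*} [Field F] [Fintype F] (q : ℕ)
    (hcard : Fintype.card F = q) (hq8 : q % 8 = 3)
    (β : F) (hβ : ¬ IsSquare β) (hβ2 : β ≠ 2) (hβ2' : β ≠ 2⁻¹) :
    ∀ γ δ : F, ∀ s : Set (Option F),
      IsFourCycleOn
        (starterFactor (hortonStarter β) γ ⊔ starterFactor (hortonNegStarter β) δ) s →
      none ∉ s := by
  intro γ δ s hs hnone
  have hneg : ¬ IsSquare (-1 : F) := by
    rw [FiniteField.isSquare_neg_one_iff]
    omega
  obtain ⟨p, p', r, hpp', hr, hp, hp', hpr, hp'r⟩ := hs.exists_common_neighbor hnone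
  obtain ⟨z, rfl⟩ := Option.ne_none_iff_exists'.mp hr
  have neighbors : ∀ {v}, (starterFactor (hortonStarter β) γ ⊔
      starterFactor (hortonNegStarter β) δ).Adj none v → v = some γ ∨ v = some δ :=
    fun h => h.imp starterFactor_adj_none starterFactor_adj_none
  rcases neighbors hp with rfl | rfl <;> rcases neighbors hp' with rfl | rfl
  · exact hpp' rfl
  · exact not_adj_of_adj_sup_hortonFactors hneg hβ hβ2 hβ2' hpr hp'r
  · exact not_adj_of_adj_sup_hortonFactors hneg hβ hβ2 hβ2' hp'r hpr
  · exact hpp' rfl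

/-- Let `q ≡ 3 (mod 8)` be an odd prime power and let
`β ∈ NQR(q) \ {-1}` with `β ∉ {2, 2⁻¹}`. Then for any one-factor `F_γ` of the
one-factorization generated by `S_β` and any one-factor `G_δ` of the
one-factorization generated by `-S_β`, the union `F_γ ∪ G_δ` contains no cycle `C`
of length four with `∞ ∈ V(C)`. -/
theorem statement_11 {F : Type*} [Field F] [Fintype F] (q : ℕ)
    (hcard : Fintype.card F = q) (hq8 : q % 8 = 3)
    (β : F) (hβ : ¬ IsSquare β) (hβ1 : β ≠ -1) (hβ2 : β ≠ 2) (hβ2' : β ≠ 2⁻¹) :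
    ∀ γ δ : F, ∀ s : Set (Option F),
      IsFourCycleOn
        (starterFactor (hortonStarter β) γ ⊔ starterFactor (hortonNegStarter β) δ) s →
      none ∉ s :=
  statement_11_general q hcard hq8 β hβ hβ2 hβ2'

end Paper
end

section
/- Let q ≡ 3 (mod 4) be an odd prime power with q ≠ 3 and let β ∈ NQR(q)\{−1}. Then S_β = {{x, xβ} : x ∈ QR(q)} is a strong starter for the additive group of F_q. -/
open SimpleGraph

namespace Paper

variable {V : Type*} {Γ : Type*} {F : Type*}

/-! The nonzero squares form a subgroup of index two in `Fˣ`, so for a non-square `c` every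
`z ≠ 0` is either `x` or `x * c` for a unique nonzero square `x`, never both. With `c = β` this
puts each `z ≠ 0` in exactly one pair `{x, xβ}`. Since `q ≡ 3 (mod 4)`, `c = -1` is a non-square
too; the ordered pairs `(x, xβ)` and `(xβ, x)` have differences `±x(1 - β)`, so applied to
`d / (1 - β)` it yields exactly one ordered pair with difference `d`. Finally the sum of
`{x, xβ}` is `x(1 + β)`, which is nonzero and determines `x` because `β ≠ -1`. -/

theorem ne_zero_of_not_isSquare {M : Type*} [MulZeroClass M] {a : M} (ha : ¬IsSquare a) :
    a ≠ 0 :=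
  fun h => ha (h ▸ IsSquare.zero)

section Squares

variable [Field F] [Fintype F]

theorem isSquare_mul_iff_of_not_isSquare {a c : F} (ha : a ≠ 0) (hc : ¬IsSquare c) :
    IsSquare (a * c) ↔ ¬IsSquare a := by
  classical
  rw [← quadraticChar_one_iff_isSquare (mul_ne_zero ha (ne_zero_of_not_isSquare hc)), map_mul,
    quadraticChar_neg_one_iff_not_isSquare.mpr hc, ← quadraticChar_neg_one_iff_not_isSquare]
  rcases quadraticChar_dichotomy ha with h | h <;> rw [h] <;> norm_num

theorem ne_mul_of_isSquare {c x y : F} (hc : ¬IsSquare c) (hx : IsSquare x) (hy : y ≠ 0)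
    (hy' : IsSquare y) : x ≠ y * c := by
  rintro rfl
  exact (isSquare_mul_iff_of_not_isSquare hy hc).mp hx hy'

theorem exists_isSquare_eq_or_eq_mul {c z : F} (hc : ¬IsSquare c) (hz : z ≠ 0) :
    ∃ x, x ≠ 0 ∧ IsSquare x ∧ (z = x ∨ z = x * c) := by
  by_cases hsq : IsSquare z
  · exact ⟨z, hz, hsq, Or.inl rfl⟩
  have hc0 := ne_zero_of_not_isSquare hc
  refine ⟨z * c⁻¹, mul_ne_zero hz (inv_ne_zero hc0), ?_, Or.inr (by field_simp)⟩
  exact (isSquare_mul_iff_of_not_isSquare hz (isSquare_inv.not.mpr hc)).mpr hsq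

end Squares

section HortonStarter

variable [Field F] {β : F}

theorem mk_mem_hortonStarter {x : F} (hx : x ≠ 0) (hsq : IsSquare x) :
    s(x, x * β) ∈ hortonStarter β :=
  ⟨x, hx, hsq, rfl⟩

theorem mk_mem_hortonStarter_iff {u v : F} :
    s(u, v) ∈ hortonStarter β ↔
      ∃ x, x ≠ 0 ∧ IsSquare x ∧ (u = x ∧ v = x * β ∨ u = x * β ∧ v = x) := by
  simp only [hortonStarter, Set.mem_ofPred_eq, Sym2.eq_iff]

theorem ne_zero_of_mem_hortonStarter (hβ : β ≠ 0) :
    ∀ e ∈ hortonStarter β, ∀ z ∈ e, z ≠ 0 := by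
  rintro _ ⟨x, hx, -, rfl⟩ z hz
  rcases Sym2.mem_iff.mp hz with rfl | rfl
  · exact hx
  · exact mul_ne_zero hx hβ

theorem exists_add_eq_of_mem_hortonStarter {u v : F} (h : s(u, v) ∈ hortonStarter β) :
    ∃ x, x ≠ 0 ∧ s(u, v) = s(x, x * β) ∧ u + v = x * (1 + β) := by
  obtain ⟨x, hx, -, he⟩ := h
  refine ⟨x, hx, he, ?_⟩
  rcases Sym2.eq_iff.mp he with ⟨rfl, rfl⟩ | ⟨rfl, rfl⟩ <;> ring

theorem add_ne_zero_of_mem_hortonStarter (hβ1 : β ≠ -1) {u v : F}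
    (h : s(u, v) ∈ hortonStarter β) : u + v ≠ 0 := by
  obtain ⟨x, hx, -, hsum⟩ := exists_add_eq_of_mem_hortonStarter h
  rw [hsum]
  exact mul_ne_zero hx fun h => hβ1 (eq_neg_of_add_eq_zero_right h)

theorem eq_of_add_eq_of_mem_hortonStarter (hβ1 : β ≠ -1) {x y u v : F}
    (hxy : s(x, y) ∈ hortonStarter β) (huv : s(u, v) ∈ hortonStarter β)
    (hsum : x + y = u + v) : s(x, y) = s(u, v) := by
  obtain ⟨a, -, hea, ha⟩ := exists_add_eq_of_mem_hortonStarter hxy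
  obtain ⟨b, -, heb, hb⟩ := exists_add_eq_of_mem_hortonStarter huv
  have hadd : (1 : F) + β ≠ 0 := fun h => hβ1 (eq_neg_of_add_eq_zero_right h)
  rw [hea, heb, mul_right_cancel₀ hadd (ha.symm.trans (hsum.trans hb))]

variable [Fintype F]

theorem existsUnique_mem_hortonStarter (hβ : ¬IsSquare β) {z : F} (hz : z ≠ 0) :
    ∃! e, e ∈ hortonStarter β ∧ z ∈ e := by
  obtain ⟨x, hx, hsq, hzx⟩ := exists_isSquare_eq_or_eq_mul hβ hz
  refine ⟨s(x, x * β), ⟨mk_mem_hortonStarter hx hsq, ?_⟩, ?_⟩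
  · rcases hzx with rfl | rfl <;> simp
  rintro _ ⟨⟨y, hy, hysq, rfl⟩, hzy⟩
  suffices y = x by rw [this]
  rcases Sym2.mem_iff.mp hzy with rfl | rfl <;> rcases hzx with h | h
  · exact h
  · exact absurd h (ne_mul_of_isSquare hβ hysq hx hsq)
  · exact absurd h.symm (ne_mul_of_isSquare hβ hsq hy hysq)
  · exact mul_right_cancel₀ (ne_zero_of_not_isSquare hβ) h

theorem existsUnique_sub_hortonStarter (hβ : ¬IsSquare β) (hneg : ¬IsSquare (-1 : F)) {d : F}
    (hd : d ≠ 0) : ∃! p : F × F, s(p.1, p.2) ∈ hortonStarter β ∧ p.1 - p.2 = d := by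
  have hsub : (1 : F) - β ≠ 0 := sub_ne_zero.mpr fun h => hβ (h ▸ IsSquare.one)
  refine existsUnique_of_exists_of_unique ?_ ?_
  · obtain ⟨x, hx, hsq, hdx⟩ := exists_isSquare_eq_or_eq_mul hneg (div_ne_zero hd hsub)
    rcases hdx with h | h <;> rw [div_eq_iff hsub] at h
    · exact ⟨(x, x * β), mk_mem_hortonStarter hx hsq, by rw [h]; ring⟩
    · exact ⟨(x * β, x), mk_mem_hortonStarter_iff.mpr ⟨x, hx, hsq, Or.inr ⟨rfl, rfl⟩⟩,
        by rw [h]; ring⟩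
  rintro ⟨u, v⟩ ⟨u', v'⟩ ⟨huv, hd⟩ ⟨huv', hd'⟩
  dsimp only at huv hd huv' hd'
  obtain ⟨y, hy, hsq, hcases⟩ := mk_mem_hortonStarter_iff.mp huv
  obtain ⟨y', hy', hsq', hcases'⟩ := mk_mem_hortonStarter_iff.mp huv'
  rcases hcases with ⟨hu, hv⟩ | ⟨hu, hv⟩ <;> rcases hcases' with ⟨hu', hv'⟩ | ⟨hu', hv'⟩ <;>
    subst u v u' v'
  · rw [mul_right_cancel₀ hsub (by linear_combination hd - hd' : y * (1 - β) = y' * (1 - β))]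
  · exact absurd (mul_right_cancel₀ hsub (by linear_combination hd - hd' :
      y * (1 - β) = y' * -1 * (1 - β))) (ne_mul_of_isSquare hneg hsq hy' hsq')
  · exact absurd (mul_right_cancel₀ hsub (by linear_combination hd' - hd :
      y' * (1 - β) = y * -1 * (1 - β))) (ne_mul_of_isSquare hneg hsq' hy hsq)
  · rw [mul_right_cancel₀ hsub (by linear_combination hd' - hd : y * (1 - β) = y' * (1 - β))]

theorem isStrongStarter_hortonStarter (hβ : ¬IsSquare β) (hβ1 : β ≠ -1)
    (hneg : ¬IsSquare (-1 : F)) : IsStrongStarter (hortonStarter β) :=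
  ⟨⟨fun _ => existsUnique_mem_hortonStarter hβ,
      ne_zero_of_mem_hortonStarter (ne_zero_of_not_isSquare hβ),
      fun _ => existsUnique_sub_hortonStarter hβ hneg⟩,
    fun _ _ => add_ne_zero_of_mem_hortonStarter hβ1,
    fun _ _ _ _ => eq_of_add_eq_of_mem_hortonStarter hβ1⟩

end HortonStarter

theorem statement_13_general {F : Type*} [Field F] [Fintype F] (q : ℕ)
    (hcard : Fintype.card F = q) (hq4 : q % 4 = 3)
    (β : F) (hβ : ¬ IsSquare β) (hβ1 : β ≠ -1) :
    IsStrongStarter (hortonStarter β) :=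
  isStrongStarter_hortonStarter hβ hβ1 <| by simp [FiniteField.isSquare_neg_one_iff, hcard, hq4]

/-- If `q ≡ 3 (mod 4)` is an odd prime power with `q ≠ 3` and
`β ∈ NQR(q) \ {-1}`, then `S_β = {{x, xβ} : x ∈ QR(q)}` is a strong starter for the
additive group of `F_q`. -/
theorem statement_13 {F : Type*} [Field F] [Fintype F] (q : ℕ)
    (hcard : Fintype.card F = q) (hq4 : q % 4 = 3) (hq3 : q ≠ 3)
    (β : F) (hβ : ¬ IsSquare β) (hβ1 : β ≠ -1) :
    IsStrongStarter (hortonStarter β) :=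
  statement_13_general q hcard hq4 β hβ hβ1

end Paper
end
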